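/- arXiv:2004.13222 — 4 statements merged into one kernel-verified Lean document; each statement's English description precedes it below -/
import Mathlib

section
/- Let h : ℝ → M_n(ℂ) be a C¹ family of Hermitian matrices with nondegenerate spectrum, with C¹ eigenvalue functions ε¹(k),...,εⁿ(k) and associated rank-one spectral projections P¹(k),...,Pⁿ(k) summing to the identity. Let f : ℝ → ℝ be C¹. Then Σ_{m=1}^n Tr[Pᵐ(k) ∂(f(h(k))) Pᵐ(k) ∂h(k)] = Σ_{m=1}^n (∂ f(εᵐ(k))) (∂ εᵐ(k)). -/
open Matrix

/-- Diagonal part of the trace identity: for a `C¹` family of Hermitian matrices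
`h(k) = Σ_m εᵐ(k) Pᵐ(k)` with nondegenerate `C¹` eigenvalues and rank-one spectral
projections, and `f` of class `C¹`,
`Σ_m Tr[Pᵐ ∂(f(h)) Pᵐ ∂h] = Σ_m (∂ f(εᵐ(k))) (∂ εᵐ(k)) = Σ_m f'(εᵐ) (ε'ᵐ)²`. -/
theorem stmt8 {n : ℕ} (h h' : ℝ → Matrix (Fin n) (Fin n) ℂ)
    (ε ε' : Fin n → ℝ → ℝ) (P P' : Fin n → ℝ → Matrix (Fin n) (Fin n) ℂ)
    (f f' : ℝ → ℝ) (Fh' : ℝ → Matrix (Fin n) (Fin n) ℂ)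
    (hherm : ∀ k, (h k).IsHermitian)
    (hspec : ∀ k, h k = ∑ m, (ε m k : ℂ) • P m k)
    (hproj : ∀ (k : ℝ) (m l : Fin n), P m k * P l k = if m = l then P m k else 0)
    (hadj : ∀ (k : ℝ) (m : Fin n), (P m k)ᴴ = P m k)
    (hsumP : ∀ k : ℝ, ∑ m, P m k = 1)
    (hrank : ∀ (k : ℝ) (m : Fin n), (P m k).trace = 1)
    (hnd : ∀ (k : ℝ) (m l : Fin n), m ≠ l → ε m k ≠ ε l k)
    (hε : ∀ (m : Fin n) (k : ℝ), HasDerivAt (ε m) (ε' m k) k)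
    (hPd : ∀ (m : Fin n) (k : ℝ) (i j : Fin n),
      HasDerivAt (fun k => P m k i j) (P' m k i j) k)
    (hhd : ∀ (k : ℝ) (i j : Fin n), HasDerivAt (fun k => h k i j) (h' k i j) k)
    (hf : ∀ x : ℝ, HasDerivAt f (f' x) x)
    (hFh : ∀ (k : ℝ) (i j : Fin n),
      HasDerivAt (fun k => (∑ m, (f (ε m k) : ℂ) • P m k) i j) (Fh' k i j) k)
    (k : ℝ) :
    ∑ m, (P m k * Fh' k * P m k * h' k).trace
      = ∑ m, ((f' (ε m k) * ε' m k * ε' m k : ℝ) : ℂ) := by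
  -- Leibniz rule for projection products
  have hprod : ∀ m l : Fin n,
      P' m k * P l k + P m k * P' l k = if m = l then P' m k else 0 := by
    intro m l
    ext i j
    have h1 : HasDerivAt (fun k => (P m k * P l k) i j)
        ((P' m k * P l k + P m k * P' l k) i j) k := by
      simp only [Matrix.mul_apply, Matrix.add_apply]
      rw [← Finset.sum_add_distrib]
      exact HasDerivAt.fun_sum fun x _ => (hPd m k i x).mul (hPd l k x j)
    have h2 : HasDerivAt (fun k => (P m k * P l k) i j)
        ((if m = l then P' m k else 0) i j) k := by
      simp only [hproj]
      by_cases hml : m = l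
      · simpa [hml] using hPd l k i j
      · simpa [hml] using hasDerivAt_const k (0 : ℂ)
    exact (h2.unique h1).symm
  -- Sandwich identity: P m P' l P m = 0
  have hsand : ∀ m l : Fin n, P m k * P' l k * P m k = 0 := by
    intro m l
    have H := congrArg (fun A => P m k * A * P m k) (hprod m l)
    simp only [Matrix.mul_add, Matrix.add_mul] at H
    by_cases hml : m = l
    · subst hml
      rw [if_pos rfl] at H
      have e1 : P m k * (P' m k * P m k) * P m k = P m k * P' m k * P m k := by
        rw [← Matrix.mul_assoc, Matrix.mul_assoc (P m k * P' m k), hproj,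
          if_pos rfl]
      have e2 : P m k * (P m k * P' m k) * P m k = P m k * P' m k * P m k := by
        rw [← Matrix.mul_assoc, hproj, if_pos rfl]
      rw [e1, e2] at H
      exact add_eq_left.mp H
    · rw [if_neg hml] at H
      have e1 : P m k * (P' m k * P l k) * P m k = 0 := by
        rw [← Matrix.mul_assoc, Matrix.mul_assoc (P m k * P' m k), hproj,
          if_neg (fun hl => hml hl.symm), Matrix.mul_zero]
      have e2 : P m k * (P m k * P' l k) * P m k = P m k * P' l k * P m k := by
        rw [← Matrix.mul_assoc, hproj, if_pos rfl]
      rw [e1, e2, zero_add] at H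
      simpa using H
  -- P m P l P m = δ_{ml} P m
  have hPP : ∀ m l : Fin n, P m k * P l k * P m k = if m = l then P m k else 0 := by
    intro m l
    rw [hproj]
    by_cases hml : m = l
    · simp [hml, hproj]
    · simp [hml]
  -- decomposition of Fh'
  have hFhdec : Fh' k = ∑ m, ((f' (ε m k) * ε' m k : ℝ) : ℂ) • P m k
      + ∑ m, ((f (ε m k) : ℝ) : ℂ) • P' m k := by
    ext i j
    have h1 : HasDerivAt (fun k => (∑ m, (f (ε m k) : ℂ) • P m k) i j)
        ((∑ m, ((f' (ε m k) * ε' m k : ℝ) : ℂ) • P m k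
          + ∑ m, ((f (ε m k) : ℝ) : ℂ) • P' m k) i j) k := by
      simp only [Matrix.sum_apply, Matrix.add_apply, Matrix.smul_apply,
        smul_eq_mul]
      rw [← Finset.sum_add_distrib]
      refine HasDerivAt.fun_sum fun m _ => ?_
      exact (((hf (ε m k)).comp k (hε m k)).ofReal_comp).mul (hPd m k i j)
    exact (hFh k i j).unique h1
  -- decomposition of h'
  have hhdec : h' k = ∑ m, ((ε' m k : ℝ) : ℂ) • P m k
      + ∑ m, ((ε m k : ℝ) : ℂ) • P' m k := by
    ext i j
    have h1 : HasDerivAt (fun k => h k i j)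
        ((∑ m, ((ε' m k : ℝ) : ℂ) • P m k
          + ∑ m, ((ε m k : ℝ) : ℂ) • P' m k) i j) k := by
      have : (fun k => h k i j) = fun k => (∑ m, (ε m k : ℂ) • P m k) i j := by
        funext k; rw [hspec]
      rw [this]
      simp only [Matrix.sum_apply, Matrix.add_apply, Matrix.smul_apply,
        smul_eq_mul]
      rw [← Finset.sum_add_distrib]
      refine HasDerivAt.fun_sum fun m _ => ?_
      exact ((hε m k).ofReal_comp).mul (hPd m k i j)
    exact (hhd k i j).unique h1
  -- sandwich of Fh'
  have key1 : ∀ m, P m k * Fh' k * P m k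
      = ((f' (ε m k) * ε' m k : ℝ) : ℂ) • P m k := by
    intro m
    rw [hFhdec, Matrix.mul_add, Matrix.add_mul, Matrix.mul_sum, Matrix.mul_sum,
      Finset.sum_mul, Finset.sum_mul]
    have e1 : ∀ l ∈ Finset.univ, P m k * (((f' (ε l k) * ε' l k : ℝ) : ℂ) • P l k) * P m k
        = if l = m then ((f' (ε m k) * ε' m k : ℝ) : ℂ) • P m k else 0 := by
      intro l _
      rw [Matrix.mul_smul, Matrix.smul_mul, hPP]
      by_cases hlm : l = m
      · simp [hlm, eq_comm]
      · rw [if_neg (fun hh => hlm hh.symm), if_neg hlm, smul_zero]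
    have e2 : ∀ l ∈ Finset.univ, P m k * (((f (ε l k) : ℝ) : ℂ) • P' l k) * P m k
        = 0 := by
      intro l _
      rw [Matrix.mul_smul, Matrix.smul_mul, hsand, smul_zero]
    rw [Finset.sum_congr rfl e1, Finset.sum_congr rfl e2, Finset.sum_ite_eq',
      Finset.sum_const_zero]
    simp
  -- sandwich of h'
  have key2 : ∀ m, P m k * h' k * P m k = ((ε' m k : ℝ) : ℂ) • P m k := by
    intro m
    rw [hhdec, Matrix.mul_add, Matrix.add_mul, Matrix.mul_sum, Matrix.mul_sum,
      Finset.sum_mul, Finset.sum_mul]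
    have e1 : ∀ l ∈ Finset.univ, P m k * (((ε' l k : ℝ) : ℂ) • P l k) * P m k
        = if l = m then ((ε' m k : ℝ) : ℂ) • P m k else 0 := by
      intro l _
      rw [Matrix.mul_smul, Matrix.smul_mul, hPP]
      by_cases hlm : l = m
      · simp [hlm, eq_comm]
      · rw [if_neg (fun hh => hlm hh.symm), if_neg hlm, smul_zero]
    have e2 : ∀ l ∈ Finset.univ, P m k * (((ε l k : ℝ) : ℂ) • P' l k) * P m k
        = 0 := by
      intro l _
      rw [Matrix.mul_smul, Matrix.smul_mul, hsand, smul_zero]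
    rw [Finset.sum_congr rfl e1, Finset.sum_congr rfl e2, Finset.sum_ite_eq',
      Finset.sum_const_zero]
    simp
  -- final computation
  refine Finset.sum_congr rfl fun m _ => ?_
  rw [key1, Matrix.smul_mul, Matrix.trace_smul]
  have htr : (P m k * h' k).trace = (ε' m k : ℂ) := by
    have hPm : P m k * P m k = P m k := by rw [hproj]; simp
    have : (P m k * h' k).trace = (P m k * h' k * P m k).trace := by
      conv_lhs => rw [← hPm, Matrix.mul_assoc]
      exact Matrix.trace_mul_comm (P m k) (P m k * h' k)
    rw [this, key2, Matrix.trace_smul, hrank]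
    simp
  rw [htr, smul_eq_mul]
  push_cast
  ring
end

section
/- Let h : ℝ → M_n(ℂ) be a C¹ family of Hermitian matrices with nondegenerate C¹ eigenvalues εᵐ(k) and spectral projections Pᵐ(k), and let f : ℝ → ℝ be C¹. Then for m ≠ l, Tr[Pᵐ(k) ∂(f(h(k))) Pˡ(k) ∂h(k)] = f(εˡ(k))(εˡ(k) - εᵐ(k)) Tr[Pᵐ(∂Pˡ)²] + f(εᵐ(k))(εᵐ(k) - εˡ(k)) Tr[Pˡ(∂Pᵐ)²]. -/
/-!
Differentiating `Pᵃ Pᵇ = δₐᵦ Pᵃ` gives `∂Pᵃ Pᵇ + Pᵃ ∂Pᵇ = δₐᵦ ∂Pᵃ`. Hence, for `m ≠ l`, every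
`X = Σₐ (cₐ Pᵃ + dₐ ∂Pᵃ)` satisfies `Pᵐ X Pˡ = (dₗ - dₘ) Pᵐ ∂Pˡ`; both `∂h` and `∂(f(h))` have
this form, with `dₐ = εᵃ` and `dₐ = f(εᵃ)`. Inserting `Pᵐ = (Pᵐ)²` and `Pˡ = (Pˡ)²` and cycling
the trace reduces the left-hand side to a multiple of `Tr[Pᵐ ∂Pˡ Pˡ ∂Pᵐ]`, which equals both
`-Tr[Pᵐ (∂Pˡ)²]` and `-Tr[Pˡ (∂Pᵐ)²]` because `Pᵐ ∂Pˡ = -∂Pᵐ Pˡ`.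
-/

open Matrix

def HasEntrywiseDerivAt {m n : Type*} (A : ℝ → Matrix m n ℂ) (A' : Matrix m n ℂ) (k : ℝ) :
    Prop :=
  ∀ i j, HasDerivAt (fun t => A t i j) (A' i j) k

namespace HasEntrywiseDerivAt

variable {m n ι : Type*} {k : ℝ}

theorem unique {A : ℝ → Matrix m n ℂ} {A' B' : Matrix m n ℂ} (hA : HasEntrywiseDerivAt A A' k)
    (hB : HasEntrywiseDerivAt A B' k) : A' = B' :=
  Matrix.ext fun i j => (hA i j).unique (hB i j)

theorem const (C : Matrix m n ℂ) : HasEntrywiseDerivAt (fun _ => C) 0 k :=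
  fun _ _ => hasDerivAt_const k _

theorem mul {l : Type*} [Fintype n] {A : ℝ → Matrix m n ℂ} {B : ℝ → Matrix n l ℂ}
    {A' : Matrix m n ℂ} {B' : Matrix n l ℂ} (hA : HasEntrywiseDerivAt A A' k)
    (hB : HasEntrywiseDerivAt B B' k) :
    HasEntrywiseDerivAt (fun t => A t * B t) (A' * B k + A k * B') k := by
  intro i j
  simpa only [Matrix.mul_apply, Matrix.add_apply, Finset.sum_add_distrib] using
    HasDerivAt.fun_sum fun x _ => (hA i x).fun_mul (hB x j)

theorem sum_ofReal_smul [Fintype ι] {g : ι → ℝ → ℝ} {g' : ι → ℝ} {A : ι → ℝ → Matrix m n ℂ}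
    {A' : ι → Matrix m n ℂ} (hg : ∀ a, HasDerivAt (g a) (g' a) k)
    (hA : ∀ a, HasEntrywiseDerivAt (A a) (A' a) k) :
    HasEntrywiseDerivAt (fun t => ∑ a, (g a t : ℂ) • A a t)
      (∑ a, ((g' a : ℂ) • A a k + (g a k : ℂ) • A' a)) k := by
  intro i j
  simpa only [Matrix.sum_apply, Matrix.add_apply, Matrix.smul_apply, smul_eq_mul] using
    HasDerivAt.fun_sum (u := Finset.univ) fun a _ => (hg a).ofReal_comp.fun_mul (hA a i j)

end HasEntrywiseDerivAt

theorem deriv_mul_add_mul_deriv_eq_ite {ι n : Type*} [DecidableEq ι] [Fintype n]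
    {P : ι → ℝ → Matrix n n ℂ} {P' : ι → Matrix n n ℂ} {k : ℝ}
    (hP : ∀ t a b, P a t * P b t = if a = b then P a t else 0)
    (hP' : ∀ a, HasEntrywiseDerivAt (P a) (P' a) k) (a b : ι) :
    P' a * P b k + P a k * P' b = if a = b then P' a else 0 := by
  refine ((hP' a).mul (hP' b)).unique ?_
  simp_rw [hP]
  split_ifs
  · exact hP' a
  · exact HasEntrywiseDerivAt.const 0

section ProjectionCalculus

variable {ι n R : Type*} [DecidableEq ι] [Fintype n] [CommRing R]
  {P P' : ι → Matrix n n R}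

theorem proj_mul_deriv_of_ne
    (hP' : ∀ a b, P' a * P b + P a * P' b = if a = b then P' a else 0)
    {a b : ι} (hab : a ≠ b) : P a * P' b = -(P' a * P b) := by
  rw [eq_neg_iff_add_eq_zero, add_comm, hP', if_neg hab]

theorem proj_mul_proj_mul_proj (hP : ∀ a b, P a * P b = if a = b then P a else 0)
    {m l : ι} (hml : m ≠ l) (a : ι) : P m * P a * P l = 0 := by
  rw [hP]
  split_ifs with hma
  · rw [hma, hP, if_neg (hma ▸ hml)]
  · rw [zero_mul]

theorem proj_mul_deriv_mul_proj (hP : ∀ a b, P a * P b = if a = b then P a else 0)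
    (hP' : ∀ a b, P' a * P b + P a * P' b = if a = b then P' a else 0)
    {m l : ι} (hml : m ≠ l) (a : ι) :
    P m * P' a * P l = (if a = l then P m * P' l else 0) - if m = a then P m * P' l else 0 := by
  rw [mul_assoc, eq_sub_of_add_eq (hP' a l), mul_sub, ← mul_assoc, hP]
  split_ifs <;> simp_all

theorem proj_mul_sum_mul_proj [Fintype ι] (hP : ∀ a b, P a * P b = if a = b then P a else 0)
    (hP' : ∀ a b, P' a * P b + P a * P' b = if a = b then P' a else 0)
    {m l : ι} (hml : m ≠ l) (c d : ι → R) :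
    P m * (∑ a, (c a • P a + d a • P' a)) * P l = (d l - d m) • (P m * P' l) := by
  simp only [Finset.mul_sum, Finset.sum_mul, mul_add, add_mul, mul_smul_comm, smul_mul_assoc,
    proj_mul_proj_mul_proj hP hml, proj_mul_deriv_mul_proj hP hP' hml, smul_zero,
    zero_add, smul_sub, Finset.sum_sub_distrib, smul_ite, Finset.sum_ite_eq, Finset.sum_ite_eq',
    Finset.mem_univ, if_true, sub_smul]

theorem trace_proj_mul_deriv_mul_proj_mul_deriv_eq_left
    (hP : ∀ a b, P a * P b = if a = b then P a else 0)
    (hP' : ∀ a b, P' a * P b + P a * P' b = if a = b then P' a else 0)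
    {m l : ι} (hml : m ≠ l) :
    (P m * P' l * (P l * P' m)).trace = -(P m * (P' l * P' l)).trace := by
  rw [proj_mul_deriv_of_ne hP' hml.symm, mul_neg, trace_neg, ← mul_assoc, trace_mul_comm,
    ← mul_assoc, ← mul_assoc, hP, if_pos rfl, mul_assoc]

theorem trace_proj_mul_deriv_mul_proj_mul_deriv_eq_right
    (hP : ∀ a b, P a * P b = if a = b then P a else 0)
    (hP' : ∀ a b, P' a * P b + P a * P' b = if a = b then P' a else 0)
    {m l : ι} (hml : m ≠ l) :
    (P m * P' l * (P l * P' m)).trace = -(P l * (P' m * P' m)).trace := by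
  rw [proj_mul_deriv_of_ne hP' hml, neg_mul, trace_neg, mul_assoc, ← mul_assoc (P l), hP,
    if_pos rfl, trace_mul_comm, mul_assoc]

theorem trace_proj_mul_sum_mul_proj_mul_sum [Fintype ι]
    (hP : ∀ a b, P a * P b = if a = b then P a else 0)
    (hP' : ∀ a b, P' a * P b + P a * P' b = if a = b then P' a else 0)
    {m l : ι} (hml : m ≠ l) (c d e g : ι → R) :
    (P m * (∑ a, (c a • P a + d a • P' a)) * P l * (∑ a, (e a • P a + g a • P' a))).trace
      = d l * (g l - g m) * (P m * (P' l * P' l)).trace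
        + d m * (g m - g l) * (P l * (P' m * P' m)).trace := by
  set X := ∑ a, (c a • P a + d a • P' a)
  set Y := ∑ a, (e a • P a + g a • P' a)
  have hidem : ∀ a, P a * P a = P a := fun a => by rw [hP, if_pos rfl]
  have hcycle : (P m * X * P l * Y).trace = (P m * X * P l * (P l * Y * P m)).trace :=
    calc (P m * X * P l * Y).trace = (P m * P m * X * (P l * P l) * Y).trace := by
          rw [hidem, hidem]
      _ = (P m * (P m * X * P l * (P l * Y))).trace := by simp only [mul_assoc]
      _ = (P m * X * P l * (P l * Y * P m)).trace := by
          rw [trace_mul_comm]; simp only [mul_assoc]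
  rw [hcycle, proj_mul_sum_mul_proj hP hP' hml, proj_mul_sum_mul_proj hP hP' hml.symm,
    smul_mul_smul_comm, trace_smul, smul_eq_mul]
  linear_combination
    (d l * (g m - g l)) * trace_proj_mul_deriv_mul_proj_mul_deriv_eq_left hP hP' hml
      - (d m * (g m - g l)) * trace_proj_mul_deriv_mul_proj_mul_deriv_eq_right hP hP' hml

end ProjectionCalculus

theorem stmt9_general {n : ℕ} (h h' : ℝ → Matrix (Fin n) (Fin n) ℂ)
    (ε ε' : Fin n → ℝ → ℝ) (P P' : Fin n → ℝ → Matrix (Fin n) (Fin n) ℂ)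
    (f f' : ℝ → ℝ) (Fh' : ℝ → Matrix (Fin n) (Fin n) ℂ)
    (hspec : ∀ k, h k = ∑ m, (ε m k : ℂ) • P m k)
    (hproj : ∀ (k : ℝ) (m l : Fin n), P m k * P l k = if m = l then P m k else 0)
    (hε : ∀ (m : Fin n) (k : ℝ), HasDerivAt (ε m) (ε' m k) k)
    (hPd : ∀ (m : Fin n) (k : ℝ) (i j : Fin n),
      HasDerivAt (fun k => P m k i j) (P' m k i j) k)
    (hhd : ∀ (k : ℝ) (i j : Fin n), HasDerivAt (fun k => h k i j) (h' k i j) k)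
    (hf : ∀ x : ℝ, HasDerivAt f (f' x) x)
    (hFh : ∀ (k : ℝ) (i j : Fin n),
      HasDerivAt (fun k => (∑ m, (f (ε m k) : ℂ) • P m k) i j) (Fh' k i j) k)
    (k : ℝ) (m l : Fin n) (hml : m ≠ l) :
    (P m k * Fh' k * P l k * h' k).trace
      = (f (ε l k) : ℂ) * ((ε l k : ℂ) - (ε m k : ℂ)) * (P m k * (P' l k * P' l k)).trace
        + (f (ε m k) : ℂ) * ((ε m k : ℂ) - (ε l k : ℂ)) * (P l k * (P' m k * P' m k)).trace := by
  have hP' := deriv_mul_add_mul_deriv_eq_ite (hproj ·) (fun a => hPd a k)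
  have hh' : h' k = ∑ a, ((ε' a k : ℂ) • P a k + (ε a k : ℂ) • P' a k) :=
    HasEntrywiseDerivAt.unique (A := h) (hhd k) <| by
      rw [funext hspec]
      exact .sum_ofReal_smul (fun a => hε a k) fun a => hPd a k
  have hFh' :
      Fh' k = ∑ a, (((f' (ε a k) * ε' a k : ℝ) : ℂ) • P a k + (f (ε a k) : ℂ) • P' a k) :=
    HasEntrywiseDerivAt.unique (hFh k)
      (.sum_ofReal_smul (fun a => (hf _).comp k (hε a k)) fun a => hPd a k)
  rw [hFh', hh']
  exact trace_proj_mul_sum_mul_proj_mul_sum (hproj k) hP' hml _ _ _ _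

/-- Off-diagonal part of the trace identity: for a `C¹` family of Hermitian matrices
`h(k) = Σ_j εʲ(k) Pʲ(k)` with nondegenerate `C¹` eigenvalues and spectral projections,
`f` of class `C¹`, and `m ≠ l`,
`Tr[Pᵐ ∂(f(h)) Pˡ ∂h] = f(εˡ)(εˡ-εᵐ)Tr[Pᵐ(∂Pˡ)²] + f(εᵐ)(εᵐ-εˡ)Tr[Pˡ(∂Pᵐ)²]`. -/
theorem stmt9 {n : ℕ} (h h' : ℝ → Matrix (Fin n) (Fin n) ℂ)
    (ε ε' : Fin n → ℝ → ℝ) (P P' : Fin n → ℝ → Matrix (Fin n) (Fin n) ℂ)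
    (f f' : ℝ → ℝ) (Fh' : ℝ → Matrix (Fin n) (Fin n) ℂ)
    (hherm : ∀ k, (h k).IsHermitian)
    (hspec : ∀ k, h k = ∑ m, (ε m k : ℂ) • P m k)
    (hproj : ∀ (k : ℝ) (m l : Fin n), P m k * P l k = if m = l then P m k else 0)
    (hadj : ∀ (k : ℝ) (m : Fin n), (P m k)ᴴ = P m k)
    (hsumP : ∀ k : ℝ, ∑ m, P m k = 1)
    (hnd : ∀ (k : ℝ) (m l : Fin n), m ≠ l → ε m k ≠ ε l k)
    (hε : ∀ (m : Fin n) (k : ℝ), HasDerivAt (ε m) (ε' m k) k)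
    (hPd : ∀ (m : Fin n) (k : ℝ) (i j : Fin n),
      HasDerivAt (fun k => P m k i j) (P' m k i j) k)
    (hhd : ∀ (k : ℝ) (i j : Fin n), HasDerivAt (fun k => h k i j) (h' k i j) k)
    (hf : ∀ x : ℝ, HasDerivAt f (f' x) x)
    (hFh : ∀ (k : ℝ) (i j : Fin n),
      HasDerivAt (fun k => (∑ m, (f (ε m k) : ℂ) • P m k) i j) (Fh' k i j) k)
    (k : ℝ) (m l : Fin n) (hml : m ≠ l) :
    (P m k * Fh' k * P l k * h' k).trace
      = (f (ε l k) : ℂ) * ((ε l k : ℂ) - (ε m k : ℂ)) * (P m k * (P' l k * P' l k)).trace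
        + (f (ε m k) : ℂ) * ((ε m k : ℂ) - (ε l k : ℂ)) * (P l k * (P' m k * P' m k)).trace :=
  stmt9_general h h' ε ε' P P' f f' Fh' hspec hproj hε hPd hhd hf hFh k m l hml
end

section
/- Let h : ℝ → M_n(ℂ) be a C¹ family of Hermitian matrices with nondegenerate C¹ eigenvalues εᵐ(k) and C¹ spectral projections Pᵐ(k), suppose there is C > 0 with |εᵐ(k) - εˡ(k)| > C for all m ≠ l and k in a compact interval B, and let f : ℝ → [0,1] be C¹. Then for λ > 0, | Re ∫_B Σ_{m≠l} (1/(2λ + i(εᵐ(k) - εˡ(k)))) Tr[Pᵐ(k) ∂(f(h(k))) Pˡ(k) ∂h(k)] dk | ≤ (4λ/C) Σ_{m≠l} ∫_B Tr[Pᵐ(k)(∂Pˡ(k))²] dk. -/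
/-!
Differentiating `Pᵐ Pˡ = δₘₗ Pᵐ` and `∑ₘ Pᵐ = 1` gives `∂Pᵐ = ∂Pᵐ Pᵐ + Pᵐ ∂Pᵐ` and
`∑ₘ ∂Pᵐ = 0`. Hence for `X = ∑ⱼ (cⱼ Pʲ + dⱼ ∂Pʲ)` and `m ≠ l` only two terms survive in
`Pᵐ X Pˡ`, and `Pᵐ X Pˡ = (dₗ - dₘ) Pᵐ ∂Pˡ Pˡ`. Both `∂h` and `∂(f(h))` have this form, with
`d = ε` and `d = f ∘ ε`, so `Tr[Pᵐ ∂(f(h)) Pˡ ∂h] = (f(εˡ) - f(εᵐ)) (εˡ - εᵐ) Tr[Pᵐ (∂Pˡ)²]`,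
where `Tr[Pᵐ (∂Pˡ)²] = Tr[(∂Pˡ Pᵐ)ᴴ (∂Pˡ Pᵐ)] ≥ 0`. As `0 ≤ f ≤ 1` and
`Re (2λ + ix)⁻¹ = 2λ / (4λ² + x²) ≤ 2λ / x²`, the real part of the `(m, l)` term is at most
`2λ / |εᵐ - εˡ| · Tr[Pᵐ (∂Pˡ)²] ≤ 2λ / C · Tr[Pᵐ (∂Pˡ)²]` on `B`; integrate.
-/

open Matrix
open scoped ComplexOrder

/- `e'` stands for the derivative of `e`: the hypotheses `hsum` and `hleib` below are the
derivatives of `∑ i, e i = 1` and `e i * e i = e i`. -/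
namespace OrthogonalIdempotents

section Ring

variable {ι A : Type*} [Ring A] {e e' : ι → A}

theorem mul_deriv_mul_eq_zero (he : OrthogonalIdempotents e)
    (hleib : ∀ i, e' i = e' i * e i + e i * e' i) {m l j : ι} (hjm : j ≠ m) (hjl : j ≠ l) :
    e m * e' j * e l = 0 := by
  calc e m * e' j * e l = e m * e' j * (e j * e l) + e m * e j * (e' j * e l) := by
        conv_lhs => rw [hleib j]
        noncomm_ring
    _ = 0 := by rw [he.ortho hjl, he.ortho hjm.symm, mul_zero, zero_mul, add_zero]

variable [Fintype ι]

theorem mul_deriv_mul_add_mul_deriv_mul (he : OrthogonalIdempotents e) (hsum : ∑ i, e' i = 0)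
    (hleib : ∀ i, e' i = e' i * e i + e i * e' i) {m l : ι} (hml : m ≠ l) :
    e m * e' m * e l + e m * e' l * e l = 0 := by
  rw [← Fintype.sum_eq_add m l hml fun j ⟨hjm, hjl⟩ => he.mul_deriv_mul_eq_zero hleib hjm hjl,
    ← Finset.sum_mul, ← Finset.mul_sum, hsum, mul_zero, zero_mul]

theorem mul_sum_smul_add_smul_mul {R : Type*} [CommRing R] [Algebra R A]
    (he : OrthogonalIdempotents e) (hsum : ∑ i, e' i = 0)
    (hleib : ∀ i, e' i = e' i * e i + e i * e' i) (c d : ι → R) {m l : ι} (hml : m ≠ l) :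
    e m * (∑ j, (c j • e j + d j • e' j)) * e l = (d l - d m) • (e m * e' l * e l) := by
  have hterm : ∀ j, e m * (c j • e j + d j • e' j) * e l = d j • (e m * e' j * e l) := by
    intro j
    have : e m * e j * e l = 0 := by
      by_cases hmj : m = j
      · rw [← hmj, (he.idem m).eq, he.ortho hml]
      · rw [he.ortho hmj, zero_mul]
    simp only [mul_add, add_mul, mul_smul_comm, smul_mul_assoc, this, smul_zero, zero_add]
  rw [Finset.mul_sum, Finset.sum_mul, Finset.sum_congr rfl fun j _ => hterm j,
    Fintype.sum_eq_add m l hml fun j ⟨hjm, hjl⟩ => by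
      rw [he.mul_deriv_mul_eq_zero hleib hjm hjl, smul_zero],
    eq_neg_of_add_eq_zero_left (he.mul_deriv_mul_add_mul_deriv_mul hsum hleib hml),
    smul_neg, sub_smul]
  abel

end Ring

theorem trace_mul_sum_mul_mul_sum {ι n R : Type*} [Fintype ι] [Fintype n] [DecidableEq n]
    [CommRing R] {e e' : ι → Matrix n n R} (he : OrthogonalIdempotents e)
    (hsum : ∑ i, e' i = 0) (hleib : ∀ i, e' i = e' i * e i + e i * e' i)
    (a b c d : ι → R) {m l : ι} (hml : m ≠ l) :
    (e m * (∑ j, (a j • e j + b j • e' j)) * e l * (∑ j, (c j • e j + d j • e' j))).trace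
      = (b l - b m) * (d l - d m) * (e m * (e' l * e' l)).trace := by
  set X := ∑ j, (a j • e j + b j • e' j)
  set Y := ∑ j, (c j • e j + d j • e' j)
  have hcyc : (e m * X * e l * Y).trace = ((e m * X * e l) * (e l * Y * e m)).trace := by
    rw [show e m * X * e l * (e l * Y * e m) = (e m * X * (e l * e l) * Y) * e m by noncomm_ring,
      (he.idem l).eq, trace_mul_comm _ (e m), ← mul_assoc, ← mul_assoc, ← mul_assoc,
      (he.idem m).eq]
  have hsq : (e m * e' l * e l * (e l * e' l * e m)).trace = (e m * (e' l * e' l)).trace := by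
    have hzero : (e m * e' l * e' l * e l).trace = 0 := by
      rw [trace_mul_comm, ← mul_assoc, ← mul_assoc, he.ortho hml.symm, zero_mul, zero_mul,
        trace_zero]
    have hlm : e l * e' l = e' l - e' l * e l := eq_sub_of_add_eq' (hleib l).symm
    calc (e m * e' l * e l * (e l * e' l * e m)).trace
        = (e m * e m * e' l * e l * e' l).trace := by
          rw [show e m * e' l * e l * (e l * e' l * e m)
              = e m * e' l * (e l * e l) * e' l * e m by noncomm_ring, (he.idem l).eq,
            trace_mul_comm, ← mul_assoc, ← mul_assoc, ← mul_assoc]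
      _ = (e m * (e' l * e' l)).trace := by
          rw [(he.idem m).eq, mul_assoc (e m * e' l), hlm, mul_sub, trace_sub, ← mul_assoc,
            hzero, sub_zero, mul_assoc]
  rw [hcyc, he.mul_sum_smul_add_smul_mul hsum hleib a b hml,
    he.mul_sum_smul_add_smul_mul hsum hleib c d hml.symm,
    eq_neg_of_add_eq_zero_right (he.mul_deriv_mul_add_mul_deriv_mul hsum hleib hml.symm),
    smul_mul_smul_comm, trace_smul, mul_neg, trace_neg, hsq, smul_eq_mul]
  ring

end OrthogonalIdempotents

theorem Matrix.trace_mul_mul_self_nonneg {n 𝕜 : Type*} [Fintype n] [RCLike 𝕜]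
    {Q R : Matrix n n 𝕜} (hQ : IsIdempotentElem Q) (hQh : Q.IsHermitian) (hR : R.IsHermitian) :
    0 ≤ (Q * (R * R)).trace := by
  have h : ((R * Q)ᴴ * (R * Q)).trace = (Q * (R * R)).trace := by
    rw [conjTranspose_mul, hQh.eq, hR.eq, ← mul_assoc, trace_mul_comm, ← mul_assoc, ← mul_assoc,
      hQ.eq, mul_assoc]
  exact h ▸ (posSemidef_conjTranspose_mul_self (R * Q)).trace_nonneg

section Derivatives

open scoped Matrix.Norms.Operator

variable {n : Type*} [Fintype n] [DecidableEq n]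

theorem Matrix.hasDerivAt_of_hasDerivAt_apply {A : ℝ → Matrix n n ℂ} {A' : Matrix n n ℂ} {k : ℝ}
    (h : ∀ i j, HasDerivAt (fun k => A k i j) (A' i j) k) : HasDerivAt A A' k := by
  have hA : A = fun k => ∑ i, ∑ j, A k i j • single i j (1 : ℂ) := by
    funext k; simpa [smul_single] using matrix_eq_sum_single (A k)
  rw [hA, show A' = ∑ i, ∑ j, A' i j • single i j (1 : ℂ) by
    simpa [smul_single] using matrix_eq_sum_single A']
  exact HasDerivAt.fun_sum fun i _ => HasDerivAt.fun_sum fun j _ => (h i j).smul_const _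

variable {P : ℝ → Matrix n n ℂ} {P' : Matrix n n ℂ} {k : ℝ}

theorem deriv_eq_of_isIdempotentElem (hP : ∀ k, IsIdempotentElem (P k))
    (hd : ∀ i j, HasDerivAt (fun k => P k i j) (P' i j) k) : P' = P' * P k + P k * P' := by
  have hP' := hasDerivAt_of_hasDerivAt_apply hd
  refine hP'.unique ?_
  simpa only [(hP _).eq] using hP'.fun_mul hP'

theorem conjTranspose_deriv_eq_of_isHermitian (hP : ∀ k, (P k).IsHermitian)
    (hd : ∀ i j, HasDerivAt (fun k => P k i j) (P' i j) k) : P'ᴴ = P' := by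
  have hPH : HasDerivAt (fun k => (P k)ᴴ) P'ᴴ k :=
    hasDerivAt_of_hasDerivAt_apply fun i j => (hd j i).star
  simp only [fun k => (hP k).eq] at hPH
  exact hPH.unique (hasDerivAt_of_hasDerivAt_apply hd)

theorem sum_deriv_eq_zero_of_sum_eq_one {ι : Type*} [Fintype ι] {P : ι → ℝ → Matrix n n ℂ}
    {P' : ι → Matrix n n ℂ} {k : ℝ} (hP : ∀ k, ∑ m, P m k = 1)
    (hd : ∀ m i j, HasDerivAt (fun k => P m k i j) (P' m i j) k) : ∑ m, P' m = 0 := by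
  have h := HasDerivAt.fun_sum (u := Finset.univ) fun m _ =>
    hasDerivAt_of_hasDerivAt_apply (hd m)
  simp only [hP] at h
  exact h.unique (hasDerivAt_const k 1)

theorem eq_sum_smul_add_smul_of_hasDerivAt {ι : Type*} [Fintype ι] {X : ℝ → Matrix n n ℂ}
    {X' : Matrix n n ℂ} {g : ι → ℝ → ℝ} {g' : ι → ℝ} {P : ι → ℝ → Matrix n n ℂ}
    {P' : ι → Matrix n n ℂ} {k : ℝ} (hX : ∀ k, X k = ∑ m, (g m k : ℂ) • P m k)
    (hXd : ∀ i j, HasDerivAt (fun k => X k i j) (X' i j) k) (hg : ∀ m, HasDerivAt (g m) (g' m) k)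
    (hd : ∀ m i j, HasDerivAt (fun k => P m k i j) (P' m i j) k) :
    X' = ∑ m, ((g' m : ℂ) • P m k + (g m k : ℂ) • P' m) := by
  have h : HasDerivAt X (∑ m, ((g m k : ℂ) • P' m + (g' m : ℂ) • P m k)) k := by
    rw [funext hX]
    exact HasDerivAt.fun_sum fun m _ =>
      (hg m).ofReal_comp.smul (hasDerivAt_of_hasDerivAt_apply (hd m))
  rw [(hasDerivAt_of_hasDerivAt_apply hXd).unique h]
  exact Finset.sum_congr rfl fun m _ => add_comm _ _

end Derivatives

theorem abs_re_one_div_mul_le {lam C u v δ : ℝ} {T : ℂ} (hlam : 0 < lam) (hC : 0 < C)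
    (hgap : C < |u - v|) (hδ : |δ| ≤ 1) (hT : 0 ≤ T) :
    |(1 / (2 * (lam : ℂ) + Complex.I * ((u : ℂ) - v)) * ((δ * (v - u) : ℝ) * T)).re|
      ≤ 4 * lam / C * T.re := by
  set x := u - v
  have hx : 0 < |x| := hC.trans hgap
  have hre : (1 / (2 * (lam : ℂ) + Complex.I * ((u : ℂ) - v))).re
      = 2 * lam / (4 * lam ^ 2 + x ^ 2) := by
    rw [one_div, Complex.inv_re, Complex.normSq_apply]
    simp only [Complex.add_re, Complex.add_im, Complex.mul_re, Complex.mul_im, Complex.I_re,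
      Complex.I_im, Complex.sub_re, Complex.sub_im, Complex.ofReal_re, Complex.ofReal_im,
      Complex.re_ofNat, Complex.im_ofNat, x]
    ring
  have hweight : |x| * (2 * lam / (4 * lam ^ 2 + x ^ 2)) ≤ 4 * lam / C := by
    rw [← sq_abs x, mul_div_assoc', div_le_div_iff₀ (by positivity) hC]
    nlinarith [mul_pos hlam hx, mul_pos hlam hC, mul_pos (mul_pos hlam hlam) hlam]
  have hT' : 0 ≤ T.re := (Complex.nonneg_iff.1 hT).1
  rw [Complex.eq_re_of_ofReal_le hT, ← Complex.ofReal_mul, Complex.re_mul_ofReal, hre, abs_mul,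
    abs_mul, abs_mul, abs_of_nonneg hT', abs_sub_comm, abs_of_pos (by positivity)]
  calc 2 * lam / (4 * lam ^ 2 + x ^ 2) * (|δ| * |x| * T.re)
      ≤ 2 * lam / (4 * lam ^ 2 + x ^ 2) * (1 * |x| * T.re) := by gcongr
    _ = |x| * (2 * lam / (4 * lam ^ 2 + x ^ 2)) * T.re := by ring
    _ ≤ 4 * lam / C * T.re := by gcongr

theorem abs_re_intervalIntegral_le {F : ℝ → ℂ} {g : ℝ → ℝ} {a b : ℝ} (hab : a ≤ b)
    (hF : IntervalIntegrable F MeasureTheory.volume a b)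
    (hg : IntervalIntegrable g MeasureTheory.volume a b)
    (h : ∀ k ∈ Set.Icc a b, |(F k).re| ≤ g k) :
    |(∫ k in a..b, F k).re| ≤ ∫ k in a..b, g k := by
  rw [← Complex.reCLM_apply, ← Complex.reCLM.intervalIntegral_comp_comm hF, ← Real.norm_eq_abs]
  refine intervalIntegral.norm_integral_le_of_norm_le hab
    (Filter.Eventually.of_forall fun k hk => ?_) hg
  simpa using h k (Set.Ioc_subset_Icc_self hk)

theorem Finset.sum_sum_ite_eq_sum_sum_filter_ne {ι M : Type*} [Fintype ι] [DecidableEq ι]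
    [AddCommMonoid M] (g : ι → ι → M) :
    ∑ m, ∑ l, (if m = l then 0 else g m l) = ∑ m, ∑ l ∈ univ.filter (m ≠ ·), g m l := by
  simp only [Finset.sum_filter, ite_not]

theorem abs_re_integral_sum_offDiag_le {ι : Type*} [Fintype ι] [DecidableEq ι] {a b C lam : ℝ}
    (hab : a ≤ b) (hC : 0 < C) (hlam : 0 < lam) {ε : ι → ℝ → ℝ} {f : ℝ → ℝ}
    {F T : ι → ι → ℝ → ℂ} (hε : ∀ m, Continuous (ε m)) (hf : Continuous f)
    (hf01 : ∀ x, f x ∈ Set.Icc (0 : ℝ) 1) (hT : ∀ m l, Continuous (T m l))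
    (hT0 : ∀ k m l, 0 ≤ T m l k)
    (hgap : ∀ k ∈ Set.Icc a b, ∀ m l, m ≠ l → C < |ε m k - ε l k|)
    (hF : ∀ k m l, m ≠ l → F m l k = ((f (ε l k) - f (ε m k)) * (ε l k - ε m k) : ℝ) * T m l k) :
    |(∫ k in a..b, ∑ m, ∑ l, if m = l then 0 else
        (1 / (2 * (lam : ℂ) + Complex.I * ((ε m k : ℂ) - (ε l k : ℂ)))) * F m l k).re|
      ≤ 4 * lam / C * ∑ m, ∑ l, if m = l then 0 else ∫ k in a..b, (T m l k).re := by
  simp only [Finset.sum_sum_ite_eq_sum_sum_filter_ne]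
  have hdenom : ∀ k m l, 2 * (lam : ℂ) + Complex.I * ((ε m k : ℂ) - (ε l k : ℂ)) ≠ 0 :=
    fun k m l h => by simpa [hlam.ne'] using congrArg Complex.re h
  have hterm : ∀ m l, m ≠ l → Continuous fun k =>
      1 / (2 * (lam : ℂ) + Complex.I * ((ε m k : ℂ) - (ε l k : ℂ))) * F m l k := by
    intro m l hml
    have hFc : Continuous (F m l) :=
      (by fun_prop : Continuous fun k =>
        (((f (ε l k) - f (ε m k)) * (ε l k - ε m k) : ℝ) : ℂ) * T m l k).congr
        fun k => (hF k m l hml).symm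
    exact (continuous_const.div (by fun_prop) (hdenom · m l)).mul hFc
  have hTre : ∀ m l, Continuous fun k => (T m l k).re := fun m l => by fun_prop
  calc _ ≤ ∫ k in a..b, 4 * lam / C * ∑ m, ∑ l ∈ Finset.univ.filter (m ≠ ·), (T m l k).re := by
        refine abs_re_intervalIntegral_le hab ?_ ?_ fun k hk => ?_
        · exact (continuous_finsetSum _ fun m _ => continuous_finsetSum _ fun l hl =>
            hterm m l (Finset.mem_filter.1 hl).2).intervalIntegrable a b
        · exact (continuous_const.mul (continuous_finsetSum _ fun m _ =>
            continuous_finsetSum _ fun l _ => hTre m l)).intervalIntegrable a b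
        rw [Complex.re_sum, Finset.mul_sum]
        refine (Finset.abs_sum_le_sum_abs _ _).trans (Finset.sum_le_sum fun m _ => ?_)
        rw [Complex.re_sum, Finset.mul_sum]
        refine (Finset.abs_sum_le_sum_abs _ _).trans (Finset.sum_le_sum fun l hl => ?_)
        have hml := (Finset.mem_filter.1 hl).2
        rw [hF k m l hml]
        exact abs_re_one_div_mul_le hlam hC (hgap k hk m l hml)
          (abs_sub_le_of_nonneg_of_le (hf01 _).1 (hf01 _).2 (hf01 _).1 (hf01 _).2) (hT0 k m l)
    _ = _ := by
        rw [intervalIntegral.integral_const_mul, intervalIntegral.integral_finsetSum fun m _ =>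
          (continuous_finsetSum _ fun l _ => hTre m l).intervalIntegrable a b]
        congr 1
        exact Finset.sum_congr rfl fun m _ => intervalIntegral.integral_finsetSum fun l _ =>
          (hTre m l).intervalIntegrable a b

theorem stmt11_general {n : ℕ} (h h' : ℝ → Matrix (Fin n) (Fin n) ℂ)
    (ε ε' : Fin n → ℝ → ℝ) (P P' : Fin n → ℝ → Matrix (Fin n) (Fin n) ℂ)
    (f f' : ℝ → ℝ) (Fh' : ℝ → Matrix (Fin n) (Fin n) ℂ)
    (a b : ℝ) (hab : a ≤ b) (C lam : ℝ) (hC : 0 < C) (hlam : 0 < lam)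
    (hspec : ∀ k, h k = ∑ m, (ε m k : ℂ) • P m k)
    (hproj : ∀ (k : ℝ) (m l : Fin n), P m k * P l k = if m = l then P m k else 0)
    (hadj : ∀ (k : ℝ) (m : Fin n), (P m k)ᴴ = P m k)
    (hsumP : ∀ k : ℝ, ∑ m, P m k = 1)
    (hgap : ∀ k ∈ Set.Icc a b, ∀ m l : Fin n, m ≠ l → C < |ε m k - ε l k|)
    (hε : ∀ (m : Fin n) (k : ℝ), HasDerivAt (ε m) (ε' m k) k)
    (hPd : ∀ (m : Fin n) (k : ℝ) (i j : Fin n),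
      HasDerivAt (fun k => P m k i j) (P' m k i j) k)
    (hPC1 : ∀ (m : Fin n) (i j : Fin n), Continuous fun k => P' m k i j)
    (hhd : ∀ (k : ℝ) (i j : Fin n), HasDerivAt (fun k => h k i j) (h' k i j) k)
    (hf : ∀ x : ℝ, HasDerivAt f (f' x) x)
    (hf01 : ∀ x : ℝ, f x ∈ Set.Icc (0 : ℝ) 1)
    (hFh : ∀ (k : ℝ) (i j : Fin n),
      HasDerivAt (fun k => (∑ m, (f (ε m k) : ℂ) • P m k) i j) (Fh' k i j) k) :
    |(∫ k in a..b, ∑ m, ∑ l, if m = l then 0 else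
        (1 / (2 * (lam : ℂ) + Complex.I * ((ε m k : ℂ) - (ε l k : ℂ)))) *
          (P m k * Fh' k * P l k * h' k).trace).re|
      ≤ (4 * lam / C) * ∑ m, ∑ l, if m = l then 0 else
          ∫ k in a..b, ((P m k * (P' l k * P' l k)).trace).re := by
  have hP : ∀ k, OrthogonalIdempotents (P · k) := fun k =>
    OrthogonalIdempotents.iff_mul_eq.2 (hproj k)
  have hsum' : ∀ k, ∑ m, P' m k = 0 := fun k => sum_deriv_eq_zero_of_sum_eq_one hsumP (hPd · k)
  have hleib : ∀ k m, P' m k = P' m k * P m k + P m k * P' m k := fun k m =>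
    deriv_eq_of_isIdempotentElem (fun k => (hP k).idem m) (hPd m k)
  have hT0 : ∀ k m l, 0 ≤ (P m k * (P' l k * P' l k)).trace := fun k m l =>
    trace_mul_mul_self_nonneg ((hP k).idem m) (hadj k m)
      (conjTranspose_deriv_eq_of_isHermitian (fun k => hadj k l) (hPd l k))
  have htrace : ∀ k m l, m ≠ l → (P m k * Fh' k * P l k * h' k).trace
      = ((f (ε l k) - f (ε m k)) * (ε l k - ε m k) : ℝ) * (P m k * (P' l k * P' l k)).trace := by
    intro k m l hml
    rw [eq_sum_smul_add_smul_of_hasDerivAt (fun _ => rfl) (hFh k)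
        (fun m => (hf _).comp k (hε m k)) (hPd · k),
      eq_sum_smul_add_smul_of_hasDerivAt hspec (hhd k) (hε · k) (hPd · k)]
    exact ((hP k).trace_mul_sum_mul_mul_sum (hsum' k) (hleib k) _ _ _ _ hml).trans
      (by push_cast; ring)
  have hPc : ∀ m, Continuous (P m) := fun m => continuous_matrix fun i j =>
    continuous_iff_continuousAt.2 fun k => (hPd m k i j).continuousAt
  have hP'c : ∀ m, Continuous (P' m) := fun m => continuous_matrix (hPC1 m)
  exact abs_re_integral_sum_offDiag_le hab hC hlam
    (fun m => continuous_iff_continuousAt.2 fun k => (hε m k).continuousAt)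
    (continuous_iff_continuousAt.2 fun x => (hf x).continuousAt) hf01 (fun m l => by fun_prop)
    hT0 hgap htrace

/-- The off-diagonal contribution to the conductivity is `O(λ)`: for a `C¹` family of
Hermitian matrices on a compact interval `B = [a,b]` with uniform spectral gap `C` and a
`C¹` function `f` with values in `[0,1]`,
`|Re ∫_B Σ_{m≠l} (2λ + i(εᵐ - εˡ))⁻¹ Tr[Pᵐ ∂(f(h)) Pˡ ∂h] dk|
  ≤ (4λ/C) Σ_{m≠l} ∫_B Tr[Pᵐ (∂Pˡ)²] dk`. -/
theorem stmt11 {n : ℕ} (h h' : ℝ → Matrix (Fin n) (Fin n) ℂ)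
    (ε ε' : Fin n → ℝ → ℝ) (P P' : Fin n → ℝ → Matrix (Fin n) (Fin n) ℂ)
    (f f' : ℝ → ℝ) (Fh' : ℝ → Matrix (Fin n) (Fin n) ℂ)
    (a b : ℝ) (hab : a ≤ b) (C lam : ℝ) (hC : 0 < C) (hlam : 0 < lam)
    (hherm : ∀ k, (h k).IsHermitian)
    (hspec : ∀ k, h k = ∑ m, (ε m k : ℂ) • P m k)
    (hproj : ∀ (k : ℝ) (m l : Fin n), P m k * P l k = if m = l then P m k else 0)
    (hadj : ∀ (k : ℝ) (m : Fin n), (P m k)ᴴ = P m k)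
    (hsumP : ∀ k : ℝ, ∑ m, P m k = 1)
    (hgap : ∀ k ∈ Set.Icc a b, ∀ m l : Fin n, m ≠ l → C < |ε m k - ε l k|)
    (hε : ∀ (m : Fin n) (k : ℝ), HasDerivAt (ε m) (ε' m k) k)
    (hεC1 : ∀ m : Fin n, Continuous (ε' m))
    (hPd : ∀ (m : Fin n) (k : ℝ) (i j : Fin n),
      HasDerivAt (fun k => P m k i j) (P' m k i j) k)
    (hPC1 : ∀ (m : Fin n) (i j : Fin n), Continuous fun k => P' m k i j)
    (hhd : ∀ (k : ℝ) (i j : Fin n), HasDerivAt (fun k => h k i j) (h' k i j) k)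
    (hhC1 : ∀ i j : Fin n, Continuous fun k => h' k i j)
    (hf : ∀ x : ℝ, HasDerivAt f (f' x) x)
    (hf01 : ∀ x : ℝ, f x ∈ Set.Icc (0 : ℝ) 1)
    (hFh : ∀ (k : ℝ) (i j : Fin n),
      HasDerivAt (fun k => (∑ m, (f (ε m k) : ℂ) • P m k) i j) (Fh' k i j) k) :
    |(∫ k in a..b, ∑ m, ∑ l, if m = l then 0 else
        (1 / (2 * (lam : ℂ) + Complex.I * ((ε m k : ℂ) - (ε l k : ℂ)))) *
          (P m k * Fh' k * P l k * h' k).trace).re|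
      ≤ (4 * lam / C) * ∑ m, ∑ l, if m = l then 0 else
          ∫ k in a..b, ((P m k * (P' l k * P' l k)).trace).re :=
  stmt11_general h h' ε ε' P P' f f' Fh' a b hab C lam hC hlam hspec hproj hadj hsumP hgap hε hPd
    hPC1 hhd hf hf01 hFh
end

section
/- Let ε : [-π/p, π/p] → ℝ be a C² even function (ε(-k) = ε(k)) which is strictly monotone increasing on [0, π/p], and let μ ∈ (ε(0), ε(π/p)). Let f_β(x) = 1/(1 + e^{β(x-μ)}). Then lim_{β→∞} ∫_{-π/p}^{π/p} f_β(ε(k)) ε''(k) dk = ∫_{{k : ε(k) ≤ μ}} ε''(k) dk = 2 ε'(k_μ), where k_μ ∈ (0, π/p) is the unique solution of ε(k_μ) = μ. -/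
open MeasureTheory Filter Set
open scoped Real Topology

/-!
As `β → ∞` the Fermi–Dirac factor `f_β(ε k)` tends to the indicator of `{ε ≤ μ}` except on the
level set `{ε = μ}`, which for an even dispersion strictly increasing on `[0, π/p]` is just
`{± k_μ}`, a null set; bounded by `1`, the factor lets dominated convergence pass to the limit.
The Fermi sea `{ε ≤ μ}` is then the interval `[-k_μ, k_μ]`, and since `ε'` is odd the fundamental
theorem of calculus gives `∫ ε'' = ε'(k_μ) - ε'(-k_μ) = 2 ε'(k_μ)`.
-/

noncomputable def fermiDirac (β μ x : ℝ) : ℝ := 1 / (1 + Real.exp (β * (x - μ)))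

lemma continuous_fermiDirac (β μ : ℝ) : Continuous (fermiDirac β μ) :=
  continuous_const.div (by fun_prop) fun _ => by positivity

lemma abs_fermiDirac_le_one (β μ x : ℝ) : |fermiDirac β μ x| ≤ 1 := by
  have hpos : 0 < 1 + Real.exp (β * (x - μ)) := by positivity
  rw [fermiDirac, abs_of_pos (one_div_pos.2 hpos), div_le_one hpos]
  linarith [Real.exp_pos (β * (x - μ))]

lemma tendsto_fermiDirac_of_lt {μ x : ℝ} (h : x < μ) :
    Tendsto (fun β => fermiDirac β μ x) atTop (𝓝 1) := by
  have hexp : Tendsto (fun β : ℝ => Real.exp (β * (x - μ))) atTop (𝓝 0) :=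
    Real.tendsto_exp_atBot.comp (tendsto_id.atTop_mul_const_of_neg (sub_neg.2 h))
  simpa [fermiDirac] using (hexp.const_add 1).inv₀ (by norm_num)

lemma tendsto_fermiDirac_of_gt {μ x : ℝ} (h : μ < x) :
    Tendsto (fun β => fermiDirac β μ x) atTop (𝓝 0) := by
  have hexp : Tendsto (fun β : ℝ => Real.exp (β * (x - μ))) atTop atTop :=
    Real.tendsto_exp_atTop.comp (tendsto_id.atTop_mul_const (sub_pos.2 h))
  simpa only [fermiDirac, one_div, Pi.inv_def] using
    (tendsto_atTop_add_const_left _ 1 hexp).inv_tendsto_atTop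

lemma tendsto_fermiDirac_of_ne {μ x : ℝ} (h : x ≠ μ) :
    Tendsto (fun β => fermiDirac β μ x) atTop (𝓝 (if x ≤ μ then 1 else 0)) := by
  rcases h.lt_or_gt with hlt | hgt
  · simpa [hlt.le] using tendsto_fermiDirac_of_lt hlt
  · simpa [not_le.2 hgt] using tendsto_fermiDirac_of_gt hgt

theorem tendsto_integral_fermiDirac_mul {α : Type*} [MeasurableSpace α] {ν : Measure α}
    {e g : α → ℝ} {μ : ℝ} (he : Measurable e) (hg : Integrable g ν)
    (hlevel : ∀ᵐ x ∂ν, e x ≠ μ) :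
    Tendsto (fun β => ∫ x, fermiDirac β μ (e x) * g x ∂ν) atTop
      (𝓝 (∫ x in {x | e x ≤ μ}, g x ∂ν)) := by
  rw [← integral_indicator (measurableSet_le he measurable_const)]
  refine tendsto_integral_filter_of_dominated_convergence (fun x => ‖g x‖) ?_ ?_ hg.norm ?_
  · exact .of_forall fun β =>
      ((continuous_fermiDirac β μ).measurable.comp he).aestronglyMeasurable.mul
        hg.aestronglyMeasurable
  · refine .of_forall fun β => .of_forall fun x => ?_
    rw [norm_mul]
    exact mul_le_of_le_one_left (norm_nonneg _) (abs_fermiDirac_le_one β μ (e x))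
  · filter_upwards [hlevel] with x hx
    convert (tendsto_fermiDirac_of_ne hx).mul_const (g x) using 2
    simp only [indicator_apply, mem_ofPred_eq, ite_mul, one_mul, zero_mul]

lemma Function.Even.apply_abs {α β : Type*} [AddGroup α] [LinearOrder α] {f : α → β}
    (hf : f.Even) (x : α) : f |x| = f x := by
  rcases abs_choice x with h | h <;> simp [h, hf x]

lemma Function.Even.deriv {𝕜 F : Type*} [NontriviallyNormedField 𝕜] [NormedAddCommGroup F]
    [NormedSpace 𝕜 F] {f : 𝕜 → F} (hf : f.Even) : (deriv f).Odd := by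
  intro x
  have h := deriv_comp_neg (f := f) (x := -x)
  rw [neg_neg, show (fun y => f (-y)) = f from funext hf] at h
  exact h

lemma integral_deriv_of_odd {g : ℝ → ℝ} (hodd : g.Odd) (hg : Differentiable ℝ g) (a : ℝ)
    (hint : IntervalIntegrable (deriv g) volume (-a) a) :
    ∫ x in (-a)..a, deriv g x = 2 * g a := by
  rw [intervalIntegral.integral_deriv_eq_sub (fun x _ => hg x) hint, hodd]
  ring

section SymmetricMonotone

variable {ε : ℝ → ℝ} {L a k : ℝ} (heven : ε.Even) (hmono : StrictMonoOn ε (Icc 0 L))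
include heven hmono

lemma apply_le_apply_iff_abs_le (hk : k ∈ Icc (-L) L) (ha : a ∈ Icc 0 L) :
    ε k ≤ ε a ↔ |k| ≤ a := by
  rw [← heven.apply_abs]
  exact hmono.le_iff_le ⟨abs_nonneg k, abs_le.2 hk⟩ ha

lemma apply_eq_apply_iff_abs_eq (hk : k ∈ Icc (-L) L) (ha : a ∈ Icc 0 L) :
    ε k = ε a ↔ |k| = a := by
  rw [← heven.apply_abs]
  exact hmono.injOn.eq_iff ⟨abs_nonneg k, abs_le.2 hk⟩ ha

lemma sublevel_eq_Icc (ha : a ∈ Icc 0 L) :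
    {k | k ∈ Icc (-L) L ∧ ε k ≤ ε a} = Icc (-a) a := by
  ext k
  refine ⟨fun ⟨hk, hle⟩ => abs_le.1 ((apply_le_apply_iff_abs_le heven hmono hk ha).1 hle),
    fun hk => ?_⟩
  have hkL : k ∈ Icc (-L) L := ⟨by linarith [hk.1, ha.2], by linarith [hk.2, ha.2]⟩
  exact ⟨hkL, (apply_le_apply_iff_abs_le heven hmono hkL ha).2 (abs_le.2 hk)⟩

lemma ae_restrict_apply_ne (ha : a ∈ Icc 0 L) :
    ∀ᵐ k ∂volume.restrict (Icc (-L) L), ε k ≠ ε a := by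
  filter_upwards [ae_restrict_mem measurableSet_Icc,
    ae_restrict_of_ae ((Set.toFinite {a, -a}).countable.ae_notMem volume)] with k hk hka
  rw [Ne, apply_eq_apply_iff_abs_eq heven hmono hk ha, abs_eq ha.1]
  simpa using hka

end SymmetricMonotone

theorem stmt12_general (p : ℝ) (ε : ℝ → ℝ) (hε : ContDiff ℝ 2 ε)
    (heven : ∀ k, ε (-k) = ε k)
    (hmono : StrictMonoOn ε (Set.Icc 0 (π / p)))
    (μ : ℝ)
    (kμ : ℝ) (hkμ : kμ ∈ Set.Ioo 0 (π / p)) (hkμF : ε kμ = μ) :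
    Filter.Tendsto
      (fun β : ℝ => ∫ k in (-(π / p))..(π / p),
        (1 / (1 + Real.exp (β * (ε k - μ)))) * deriv (deriv ε) k)
      Filter.atTop
      (nhds (∫ k in {k | k ∈ Set.Icc (-(π / p)) (π / p) ∧ ε k ≤ μ}, deriv (deriv ε) k)) ∧
    (∫ k in {k | k ∈ Set.Icc (-(π / p)) (π / p) ∧ ε k ≤ μ}, deriv (deriv ε) k)
      = 2 * deriv ε kμ := by
  subst hkμF
  have hkμIcc : kμ ∈ Icc 0 (π / p) := Ioo_subset_Icc_self hkμ
  have hε' : ContDiff ℝ 1 (deriv ε) := hε.deriv'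
  have hε'' : Continuous (deriv (deriv ε)) := hε'.continuous_deriv_one
  constructor
  · have hlim := tendsto_integral_fermiDirac_mul hε.continuous.measurable
      hε''.integrableOn_Icc (ae_restrict_apply_ne heven hmono hkμIcc)
    rw [Measure.restrict_restrict (measurableSet_le hε.continuous.measurable measurable_const),
      inter_comm] at hlim
    simp only [intervalIntegral.integral_of_le (by linarith [hkμ.1, hkμ.2] : -(π / p) ≤ π / p),
      ← integral_Icc_eq_integral_Ioc]
    exact hlim
  · rw [sublevel_eq_Icc heven hmono hkμIcc, integral_Icc_eq_integral_Ioc,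
      ← intervalIntegral.integral_of_le (by linarith [hkμ.1] : -kμ ≤ kμ)]
    exact integral_deriv_of_odd (Function.Even.deriv heven) (hε'.differentiable one_ne_zero) kμ
      (hε''.intervalIntegrable _ _)

/-- Low-temperature limit for a one-dimensional band: if `ε` is a `C²` even dispersion,
strictly increasing on `[0, π/p]`, and `μ ∈ (ε(0), ε(π/p))` with Fermi point `k_μ`, then
`lim_{β→∞} ∫_{-π/p}^{π/p} f_β(ε(k)) ε''(k) dk = ∫_{{ε ≤ μ}} ε''(k) dk = 2 ε'(k_μ)`. -/
theorem stmt12 (p : ℝ) (hp : 0 < p) (ε : ℝ → ℝ) (hε : ContDiff ℝ 2 ε)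
    (heven : ∀ k, ε (-k) = ε k)
    (hmono : StrictMonoOn ε (Set.Icc 0 (π / p)))
    (μ : ℝ) (hμ : μ ∈ Set.Ioo (ε 0) (ε (π / p)))
    (kμ : ℝ) (hkμ : kμ ∈ Set.Ioo 0 (π / p)) (hkμF : ε kμ = μ) :
    Filter.Tendsto
      (fun β : ℝ => ∫ k in (-(π / p))..(π / p),
        (1 / (1 + Real.exp (β * (ε k - μ)))) * deriv (deriv ε) k)
      Filter.atTop
      (nhds (∫ k in {k | k ∈ Set.Icc (-(π / p)) (π / p) ∧ ε k ≤ μ}, deriv (deriv ε) k)) ∧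
    (∫ k in {k | k ∈ Set.Icc (-(π / p)) (π / p) ∧ ε k ≤ μ}, deriv (deriv ε) k)
      = 2 * deriv ε kμ :=
  stmt12_general p ε hε heven hmono μ kμ hkμ hkμF
end
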